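/- arXiv:2605.17677 — 2 statements merged into one kernel-verified Lean document; each statement's English description precedes it below -/
import Mathlib

section
/- Fix k ≥ 1 and real numbers a_1, …, a_k with Σ_{j=i}^k a_j > 0 for all 1 ≤ i ≤ k. For n large, let (Q_1^n, …, Q_k^n) be independent with Q_i^n Geometric on ℕ_0 with success probability 1 − ρ_i^{(n)}, where ρ_i^{(n)} = Π_{j=i}^k (1 − a_j/√n). Then (Q_1^n/√n, …, Q_k^n/√n) converges in distribution to ⊗_{i=1}^k Exp(Σ_{j=i}^k a_j) as n → ∞. -/
/-!
If `X ∼ Exp(θ)` and `s > 0`, then `⌊X / s⌋` is geometric: `P(⌊X / s⌋ ≥ m) = (e^{-θ s})^m`.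
With `θ_i = ∑_{j ≥ i} a_j` and `s_i^{(n)} = -log ρ_i^{(n)} / θ_i`, the vector `(Q_i^n)_i` therefore
has, for large `n`, the law of `(⌊X_i / s_i^{(n)}⌋)_i` with `X ∼ ⊗ Exp(θ_i)`, because multivariate
tails `P(Q ≥ m)` determine a law on `ℕ^k`. Since `√n · s_i^{(n)} → 1`, the coupled vectors
`⌊X_i / s_i^{(n)}⌋ / √n` converge to `X` almost surely, and dominated convergence concludes.
-/

open Filter Finset MeasureTheory ProbabilityTheory
open scoped ENNReal Topology

lemma Finset.prod_Icc_one_eq_prod_fin {M : Type*} [CommMonoid M] (k : ℕ) (g : ℕ → M) :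
    ∏ i ∈ Icc 1 k, g i = ∏ i : Fin k, g (i + 1) := by
  rw [Fin.prod_univ_eq_prod_range (fun i => g (i + 1)), range_eq_Ico, prod_Ico_add' g 0 k 1]
  rfl

lemma Finset.forall_mem_Icc_one_iff_forall_fin {k : ℕ} {p : ℕ → Prop} :
    (∀ i ∈ Icc 1 k, p i) ↔ ∀ i : Fin k, p (i + 1) := by
  refine ⟨fun h i => h _ (mem_Icc.2 ⟨by omega, i.isLt⟩), fun h i hi => ?_⟩
  obtain ⟨hi1, hik⟩ := mem_Icc.1 hi
  simpa [Nat.sub_add_cancel hi1] using h ⟨i - 1, by omega⟩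

lemma MeasureTheory.measure_forall_fin_le_eq_prod {Ω : Type*} [MeasurableSpace Ω]
    {μ : Measure Ω} {k : ℕ} {X : ℕ → Ω → ℕ} {p : ℕ → ℝ}
    (h : ∀ m : ℕ → ℕ,
      μ {ω | ∀ i ∈ Icc 1 k, m i ≤ X i ω} = ∏ i ∈ Icc 1 k, ENNReal.ofReal (p i ^ m i))
    (m : Fin k → ℕ) :
    μ {ω | ∀ i : Fin k, m i ≤ X (i + 1) ω} = ∏ i : Fin k, ENNReal.ofReal (p (i + 1) ^ m i) := by
  have hinj : Function.Injective fun i : Fin k => (i : ℕ) + 1 :=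
    fun i j h => Fin.ext (by simpa using h)
  simpa only [forall_mem_Icc_one_iff_forall_fin, prod_Icc_one_eq_prod_fin, hinj.extend_apply]
    using h (Function.extend (fun i : Fin k => (i : ℕ) + 1) m 0)

lemma MeasureTheory.Measure.ext_of_pi_Ici {ι α : Type*} [Finite ι] [LinearOrder α] [OrderBot α]
    [TopologicalSpace α] [OrderTopology α] [SecondCountableTopology α] [MeasurableSpace α]
    [BorelSpace α] {μ ν : Measure (ι → α)} [IsFiniteMeasure μ]
    (h : ∀ a : ι → α,
      μ (Set.univ.pi fun i => Set.Ici (a i)) = ν (Set.univ.pi fun i => Set.Ici (a i))) :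
    μ = ν := by
  have hspan : IsCountablySpanning (Set.range (Set.Ici : α → Set α)) :=
    ⟨fun _ => Set.Ici ⊥, fun _ => ⟨⊥, rfl⟩, by simp [Set.iUnion_const]⟩
  have hgen : (MeasurableSpace.pi : MeasurableSpace (ι → α)) =
      MeasurableSpace.generateFrom (Set.univ.pi '' Set.univ.pi fun _ => Set.range Set.Ici) := by
    have hα : ‹MeasurableSpace α› = MeasurableSpace.generateFrom (Set.range Set.Ici) := by
      rw [BorelSpace.measurable_eq (α := α), borel_eq_generateFrom_Ici]
    rw [← generateFrom_pi_eq fun _ => hspan, ← hα]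
  refine ext_of_generate_finite _ hgen (IsPiSystem.pi fun _ => isPiSystem_Ici) ?_ ?_
  · rintro _ ⟨S, hS, rfl⟩
    choose a ha using fun i => hS i trivial
    obtain rfl : S = fun i => Set.Ici (a i) := funext fun i => (ha i).symm
    exact h a
  · simpa using h fun _ => ⊥

namespace ProbabilityTheory

lemma expMeasure_Ici {r t : ℝ} (hr : 0 < r) (ht : 0 ≤ t) :
    expMeasure r (Set.Ici t) = ENNReal.ofReal (Real.exp (-(r * t))) := by
  have := isProbabilityMeasure_expMeasure hr
  have hatom : expMeasure r {t} = 0 :=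
    withDensity_absolutelyContinuous _ _ (Real.volume_singleton (a := t))
  have hexp : Real.exp (-(r * t)) ≤ 1 := Real.exp_le_one_iff.2 (by nlinarith)
  rw [← Set.compl_Iio, prob_compl_eq_one_sub measurableSet_Iio,
    measure_congr (Iio_ae_eq_Iic' hatom), ← ofReal_cdf, cdf_expMeasure_eq hr, if_pos ht,
    ← ENNReal.ofReal_one, ← ENNReal.ofReal_sub _ (by linarith), sub_sub_cancel]

lemma ae_nonneg_expMeasure {r : ℝ} (hr : 0 < r) : ∀ᵐ y ∂expMeasure r, 0 ≤ y := by
  have := isProbabilityMeasure_expMeasure hr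
  rw [ae_iff]
  refine measure_mono_null (fun y (hy : ¬0 ≤ y) => Set.mem_Iic.2 (not_le.1 hy).le) ?_
  rw [← ofReal_cdf, cdf_expMeasure_eq hr, if_pos le_rfl]
  simp

lemma expMeasure_setOf_le_natFloor_div {r s : ℝ} (hr : 0 < r) (hs : 0 < s) (m : ℕ) :
    expMeasure r {y | m ≤ ⌊y / s⌋₊} = ENNReal.ofReal (Real.exp (-(r * s)) ^ m) := by
  have := isProbabilityMeasure_expMeasure hr
  rcases eq_or_ne m 0 with rfl | hm
  · simp
  have hset : {y : ℝ | m ≤ ⌊y / s⌋₊} = Set.Ici (m * s) := by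
    ext y
    rw [Set.mem_ofPred_eq, Nat.le_floor_iff' hm, le_div_iff₀ hs, Set.mem_Ici]
  rw [hset, expMeasure_Ici hr (by positivity), ← Real.exp_nat_mul]
  congr 2
  ring

lemma measurable_natFloor_div {ι : Type*} (s : ι → ℝ) : Measurable fun (x : ι → ℝ) i => ⌊x i / s i⌋₊ :=
  measurable_pi_lambda _ fun i => ((measurable_pi_apply i).div_const _).nat_floor

variable {ι : Type*} [Fintype ι] {θ s : ι → ℝ}

lemma map_natFloor_div_pi_expMeasure_univ_pi_Ici (hθ : ∀ i, 0 < θ i) (hs : ∀ i, 0 < s i)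
    (m : ι → ℕ) :
    (Measure.pi fun i => expMeasure (θ i)).map (fun x i => ⌊x i / s i⌋₊)
        (Set.univ.pi fun i => Set.Ici (m i))
      = ∏ i, ENNReal.ofReal (Real.exp (-(θ i * s i)) ^ m i) := by
  have := fun i => isProbabilityMeasure_expMeasure (hθ i)
  rw [Measure.map_apply (by fun_prop) (.univ_pi fun _ => measurableSet_Ici)]
  have hpre : (fun x i => ⌊x i / s i⌋₊) ⁻¹' Set.univ.pi (fun i => Set.Ici (m i))
      = Set.univ.pi fun i => {y : ℝ | m i ≤ ⌊y / s i⌋₊} := by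
    ext x
    simp [Pi.le_def]
  rw [hpre, Measure.pi_pi]
  exact prod_congr rfl fun i _ => expMeasure_setOf_le_natFloor_div (hθ i) (hs i) (m i)

lemma identDistrib_natFloor_div_pi_expMeasure {Ω : Type*} [MeasurableSpace Ω] {μ : Measure Ω}
    [IsProbabilityMeasure μ] {X : Ω → ι → ℕ} (hX : Measurable X) (hθ : ∀ i, 0 < θ i)
    (hs : ∀ i, 0 < s i)
    (htail : ∀ m : ι → ℕ, μ {ω | ∀ i, m i ≤ X ω i}
      = ∏ i, ENNReal.ofReal (Real.exp (-(θ i * s i)) ^ m i)) :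
    IdentDistrib X (fun x i => ⌊x i / s i⌋₊) μ (Measure.pi fun i => expMeasure (θ i)) := by
  refine ⟨hX.aemeasurable, (measurable_natFloor_div s).aemeasurable,
    Measure.ext_of_pi_Ici fun m => ?_⟩
  rw [map_natFloor_div_pi_expMeasure_univ_pi_Ici hθ hs, ← htail,
    Measure.map_apply hX (.univ_pi fun _ => measurableSet_Ici)]
  congr 1
  ext ω
  simp [Pi.le_def]

end ProbabilityTheory

lemma eventually_forall_one_sub_div_pos {ι : Type*} (S : Finset ι) (a : ι → ℝ) :
    ∀ᶠ t : ℝ in atTop, ∀ j ∈ S, 0 < 1 - a j / t := by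
  rw [eventually_all_finset]
  intro j _
  filter_upwards [(tendsto_const_nhds.div_atTop tendsto_id).eventually_lt_const one_pos]
    with t ht
  exact sub_pos.2 ht

lemma tendsto_mul_neg_log_prod_one_sub_div {ι : Type*} (S : Finset ι) (a : ι → ℝ) :
    Tendsto (fun t : ℝ => t * -Real.log (∏ j ∈ S, (1 - a j / t))) atTop (𝓝 (∑ j ∈ S, a j)) := by
  have hterm (j : ι) : Tendsto (fun t : ℝ => -(t * Real.log (1 - a j / t))) atTop (𝓝 (a j)) := by
    simpa [sub_eq_add_neg, neg_div] using (Real.tendsto_mul_log_one_add_div_atTop (-a j)).neg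
  refine (tendsto_finsetSum S fun j _ => hterm j).congr' ?_
  filter_upwards [eventually_forall_one_sub_div_pos S a] with t ht
  rw [Real.log_prod fun j hj => (ht j hj).ne', mul_neg, Finset.mul_sum, Finset.sum_neg_distrib]

lemma tendsto_sqrt_mul_neg_log_prod_one_sub_div_div {ι : Type*} (S : Finset ι) (a : ι → ℝ)
    (ha : 0 < ∑ j ∈ S, a j) :
    Tendsto (fun n : ℕ => Real.sqrt n * (-Real.log (∏ j ∈ S, (1 - a j / Real.sqrt n)) /
      ∑ j ∈ S, a j)) atTop (𝓝 1) := by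
  have h := ((tendsto_mul_neg_log_prod_one_sub_div S a).comp
    (Real.tendsto_sqrt_atTop.comp tendsto_natCast_atTop_atTop)).div_const (∑ j ∈ S, a j)
  rw [div_self ha.ne'] at h
  exact h.congr fun n => mul_div_assoc _ _ _

section ScaledFloor

variable {α : Type*} {l : Filter α} {a s : α → ℝ}

lemma eventually_pos_of_tendsto_mul_nhds_one (ha : Tendsto a l atTop)
    (has : Tendsto (fun n => a n * s n) l (𝓝 1)) : ∀ᶠ n in l, 0 < a n ∧ 0 < s n := by
  filter_upwards [ha.eventually_gt_atTop 0, has.eventually_const_lt one_pos] with n han hasn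
  exact ⟨han, pos_of_mul_pos_right hasn han.le⟩

lemma tendsto_natFloor_div_div (ha : Tendsto a l atTop)
    (has : Tendsto (fun n => a n * s n) l (𝓝 1)) {x : ℝ} (hx : 0 ≤ x) :
    Tendsto (fun n => (⌊x / s n⌋₊ : ℝ) / a n) l (𝓝 x) := by
  have hupper : Tendsto (fun n => x / (a n * s n)) l (𝓝 x) := by
    simpa [div_eq_mul_inv] using (has.inv₀ one_ne_zero).const_mul x
  have hlower : Tendsto (fun n => x / (a n * s n) - 1 / a n) l (𝓝 x) := by
    simpa using hupper.sub ((tendsto_const_nhds (x := (1 : ℝ))).div_atTop ha)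
  refine tendsto_of_tendsto_of_tendsto_of_le_of_le' hlower hupper ?_ ?_
  all_goals
    filter_upwards [eventually_pos_of_tendsto_mul_nhds_one ha has] with n ⟨han, hsn⟩
    rw [mul_comm (a n), ← div_div]
  · rw [← sub_div]
    gcongr
    exact (Nat.sub_one_lt_floor _).le
  · gcongr
    exact Nat.floor_le (div_nonneg hx hsn.le)

end ScaledFloor

lemma BoundedContinuousFunction.tendsto_integral_comp_of_ae_tendsto {ι Ω E : Type*}
    {l : Filter ι} [l.IsCountablyGenerated] [MeasurableSpace Ω] {μ : Measure Ω}
    [IsFiniteMeasure μ] [TopologicalSpace E] [MeasurableSpace E] [OpensMeasurableSpace E]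
    (f : BoundedContinuousFunction E ℝ) {g : ι → Ω → E} {g₀ : Ω → E}
    (hg : ∀ n, AEMeasurable (g n) μ) (hlim : ∀ᵐ ω ∂μ, Tendsto (fun n => g n ω) l (𝓝 (g₀ ω))) :
    Tendsto (fun n => ∫ ω, f (g n ω) ∂μ) l (𝓝 (∫ ω, f (g₀ ω) ∂μ)) := by
  refine tendsto_integral_filter_of_dominated_convergence (fun _ => ‖f‖)
    (.of_forall fun n => (f.continuous.measurable.comp_aemeasurable (hg n)).aestronglyMeasurable)
    (.of_forall fun n => .of_forall fun ω => f.norm_coe_le_norm _) (integrable_const _) ?_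
  filter_upwards [hlim] with ω hω
  exact (f.continuous.tendsto _).comp hω

theorem scaled_geometric_tendsto_exponential_finite_general
    (k : ℕ) (A : ℕ → ℝ)
    (hA : ∀ i, 1 ≤ i → i ≤ k → 0 < ∑ j ∈ Icc i k, A j)
    {Ω : Type*} [MeasurableSpace Ω] (μ : Measure Ω) [IsProbabilityMeasure μ]
    (Q : ℕ → ℕ → Ω → ℕ)
    (hmeas : ∀ n i, Measurable (Q n i))
    -- for (large) `n`, `Q n 1, …, Q n k` are independent geometric random
    -- variables on `ℕ₀` with success probabilities `1 − ρ_i^{(n)}`,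
    -- `ρ_i^{(n)} = ∏_{j=i}^k (1 − a_j/√n)`:
    (N₀ : ℕ)
    (htail : ∀ n, N₀ ≤ n → ∀ m : ℕ → ℕ,
      μ {ω | ∀ i ∈ Icc 1 k, m i ≤ Q n i ω}
        = ∏ i ∈ Icc 1 k, ENNReal.ofReal
            ((∏ j ∈ Icc i k, (1 - A j / Real.sqrt n)) ^ m i)) :
    ∀ f : BoundedContinuousFunction (Fin k → ℝ) ℝ,
      Tendsto
        (fun n : ℕ => ∫ ω, f (fun i => (Q n (i + 1) ω : ℝ) / Real.sqrt n) ∂μ)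
        atTop
        (nhds (∫ x, f x ∂ (Measure.pi fun i : Fin k =>
          ProbabilityTheory.expMeasure (∑ j ∈ Icc ((i : ℕ) + 1) k, A j)))) := by
  intro f
  set θ : Fin k → ℝ := fun i => ∑ j ∈ Icc ((i : ℕ) + 1) k, A j
  have hθ (i : Fin k) : 0 < θ i := hA _ (by omega) i.isLt
  have := fun i => isProbabilityMeasure_expMeasure (hθ i)
  set ρ : ℕ → Fin k → ℝ := fun n i => ∏ j ∈ Icc ((i : ℕ) + 1) k, (1 - A j / Real.sqrt n)
  set s : ℕ → Fin k → ℝ := fun n i => -Real.log (ρ n i) / θ i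
  have hsqrt : Tendsto (fun n : ℕ => Real.sqrt n) atTop atTop :=
    Real.tendsto_sqrt_atTop.comp tendsto_natCast_atTop_atTop
  have hs (i : Fin k) : Tendsto (fun n : ℕ => Real.sqrt n * s n i) atTop (𝓝 1) :=
    tendsto_sqrt_mul_neg_log_prod_one_sub_div_div _ A (hθ i)
  have hρ : ∀ᶠ n in atTop, ∀ i, 0 < ρ n i := eventually_all.2 fun i =>
    (hsqrt.eventually (eventually_forall_one_sub_div_pos _ A)).mono fun _ => prod_pos
  have hspos : ∀ᶠ n in atTop, ∀ i, 0 < s n i := eventually_all.2 fun i =>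
    (eventually_pos_of_tendsto_mul_nhds_one hsqrt (hs i)).mono fun _ => And.right
  have hlaw : ∀ᶠ n in atTop, IdentDistrib (fun ω (i : Fin k) => Q n (i + 1) ω)
      (fun x i => ⌊x i / s n i⌋₊) μ (Measure.pi fun i => expMeasure (θ i)) := by
    filter_upwards [eventually_ge_atTop N₀, hρ, hspos] with n hn hρn hsn
    refine identDistrib_natFloor_div_pi_expMeasure (by fun_prop) hθ hsn fun m =>
      (measure_forall_fin_le_eq_prod (htail n hn) m).trans (prod_congr rfl fun i _ => ?_)
    rw [mul_div_cancel₀ _ (hθ i).ne', neg_neg, Real.exp_log (hρn i)]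
  have hscale (n : ℕ) : Measurable fun (v : Fin k → ℕ) i => (v i : ℝ) / Real.sqrt n := by
    fun_prop
  have hnonneg : ∀ᵐ x ∂(Measure.pi fun i => expMeasure (θ i)), ∀ i, 0 ≤ x i :=
    ae_all_iff.2 fun i => Measure.tendsto_eval_ae_ae.eventually (ae_nonneg_expMeasure (hθ i))
  refine (f.tendsto_integral_comp_of_ae_tendsto (g₀ := id)
    (fun n => ((hscale n).comp (measurable_natFloor_div (s n))).aemeasurable) ?_).congr' ?_
  · filter_upwards [hnonneg] with x hx
    exact tendsto_pi_nhds.2 fun i => tendsto_natFloor_div_div hsqrt (hs i) (hx i)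
  · filter_upwards [hlaw] with n hn
    exact (hn.comp (f.continuous.measurable.comp (hscale n))).integral_eq.symm

/-- Heavy traffic limit of the stationary gap distribution of the `k`-station
Jackson network: the scaled independent geometric gaps converge in distribution
to `⊗_{i=1}^k Exp(Σ_{j=i}^k a_j)`. -/
theorem scaled_geometric_tendsto_exponential_finite
    (k : ℕ) (hk : 1 ≤ k) (A : ℕ → ℝ)
    (hA : ∀ i, 1 ≤ i → i ≤ k → 0 < ∑ j ∈ Icc i k, A j)
    {Ω : Type*} [MeasurableSpace Ω] (μ : Measure Ω) [IsProbabilityMeasure μ]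
    (Q : ℕ → ℕ → Ω → ℕ)
    (hmeas : ∀ n i, Measurable (Q n i))
    -- for (large) `n`, `Q n 1, …, Q n k` are independent geometric random
    -- variables on `ℕ₀` with success probabilities `1 − ρ_i^{(n)}`,
    -- `ρ_i^{(n)} = ∏_{j=i}^k (1 − a_j/√n)`:
    (N₀ : ℕ)
    (htail : ∀ n, N₀ ≤ n → ∀ m : ℕ → ℕ,
      μ {ω | ∀ i ∈ Icc 1 k, m i ≤ Q n i ω}
        = ∏ i ∈ Icc 1 k, ENNReal.ofReal
            ((∏ j ∈ Icc i k, (1 - A j / Real.sqrt n)) ^ m i)) :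
    ∀ f : BoundedContinuousFunction (Fin k → ℝ) ℝ,
      Tendsto
        (fun n : ℕ => ∫ ω, f (fun i => (Q n (i + 1) ω : ℝ) / Real.sqrt n) ∂μ)
        atTop
        (nhds (∫ x, f x ∂ (Measure.pi fun i : Fin k =>
          ProbabilityTheory.expMeasure (∑ j ∈ Icc ((i : ℕ) + 1) k, A j)))) :=
  scaled_geometric_tendsto_exponential_finite_general k A hA μ Q hmeas N₀ htail
end

section
/- Let a > b > 0. For each n ≥ 1 let Z_1^n, …, Z_n^n be independent, Z_i^n ∼ Geometric on ℕ_0 with success probability 1 − ρ_i^{(n)}, where ρ_1^{(n)} = (1 − a n^{−3/2} + b n^{−1/2})(1 − a n^{−3/2})^{n−1} and ρ_i^{(n)} = (1 − a n^{−3/2})^{n−i+1} for i ≥ 2. Then for every fixed k ≥ 1, E[Σ_{i=1}^k Z_i^n] / (√n·(1/(a−b) + (k−1)/a)) → 1 as n → ∞. -/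
/-!
Under the tail hypothesis `Z_i^n` is geometric, so by the tail-sum formula
`E[Z_i^n] = ρ_i / (1 - ρ_i)`. With `s = a n^{-3/2}` and an exponent `m ~ n`, the bounds
`m s / (1 + m s) ≤ 1 - (1 - s)^m ≤ m s` give `√n (1 - (1 - s)^m) → a`; hence every `ρ_i^{(n)} → 1`
while `√n (1 - ρ_i^{(n)})` tends to `a - b` for `i = 1` (the extra `b n^{-1/2}`) and to `a` for
`i ≥ 2`. So `E[Z_i^n] / √n → 1/(a - b)` resp. `1/a`, and summing over `i ≤ k` gives the limit.
-/

open Filter Finset MeasureTheory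
open scoped ENNReal

/-- Traffic intensities of the Jackson network representing the gaps of the
`n`-server marginal-JSQ system with pauses. -/
noncomputable def jacksonRho (a b : ℝ) (n i : ℕ) : ℝ :=
  if i = 1 then
    (1 - a / (n : ℝ) ^ ((3 : ℝ) / 2) + b / Real.sqrt n)
      * (1 - a / (n : ℝ) ^ ((3 : ℝ) / 2)) ^ (n - 1)
  else (1 - a / (n : ℝ) ^ ((3 : ℝ) / 2)) ^ (n - i + 1)

open scoped Topology

section GeometricTail

variable {Ω : Type*} [MeasurableSpace Ω] {μ : Measure Ω} {g : Ω → ℕ}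

theorem lintegral_natCast_eq_tsum_measure_lt (hg : Measurable g) :
    ∫⁻ ω, (g ω : ℝ≥0∞) ∂μ = ∑' m : ℕ, μ {ω | m < g ω} := by
  have hset (m : ℕ) : MeasurableSet {ω | m < g ω} := hg measurableSet_Ioi
  have hcount (N : ℕ) : (N : ℝ≥0∞) = ∑' m : ℕ, {m : ℕ | m < N}.indicator 1 m := by
    rw [tsum_eq_sum (s := Finset.range N) fun m hm => by simpa using hm]
    simp [Set.indicator_apply, Finset.filter_true_of_mem fun _ => Finset.mem_range.1]
  calc ∫⁻ ω, (g ω : ℝ≥0∞) ∂μ = ∫⁻ ω, ∑' m : ℕ, {ω | m < g ω}.indicator 1 ω ∂μ := by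
        simp_rw [hcount]; rfl
    _ = ∑' m : ℕ, μ {ω | m < g ω} := by
        rw [lintegral_tsum fun m => (measurable_one.indicator (hset m)).aemeasurable]
        simp_rw [lintegral_indicator_one (hset _)]

variable {ρ : ℝ}

theorem lintegral_natCast_of_geometric_tail (hg : Measurable g) (h0 : 0 ≤ ρ) (h1 : ρ < 1)
    (ht : ∀ m : ℕ, μ {ω | m ≤ g ω} = ENNReal.ofReal (ρ ^ m)) :
    ∫⁻ ω, (g ω : ℝ≥0∞) ∂μ = ENNReal.ofReal (ρ / (1 - ρ)) := by
  have hsum : HasSum (fun m : ℕ => ρ ^ (m + 1)) (ρ / (1 - ρ)) := by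
    simpa [pow_succ', div_eq_mul_inv] using (hasSum_geometric_of_lt_one h0 h1).mul_left ρ
  rw [lintegral_natCast_eq_tsum_measure_lt hg, ← hsum.tsum_eq,
    ENNReal.ofReal_tsum_of_nonneg (fun m => by positivity) hsum.summable]
  exact tsum_congr fun m => ht (m + 1)

theorem integrable_natCast_of_geometric_tail (hg : Measurable g) (h0 : 0 ≤ ρ) (h1 : ρ < 1)
    (ht : ∀ m : ℕ, μ {ω | m ≤ g ω} = ENNReal.ofReal (ρ ^ m)) :
    Integrable (fun ω => (g ω : ℝ)) μ := by
  simpa using integrable_toReal_of_lintegral_ne_top (f := fun ω => (g ω : ℝ≥0∞))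
    (measurable_from_top.comp hg).aemeasurable
    (by simp [lintegral_natCast_of_geometric_tail hg h0 h1 ht])

theorem integral_natCast_of_geometric_tail (hg : Measurable g) (h0 : 0 ≤ ρ) (h1 : ρ < 1)
    (ht : ∀ m : ℕ, μ {ω | m ≤ g ω} = ENNReal.ofReal (ρ ^ m)) :
    ∫ ω, (g ω : ℝ) ∂μ = ρ / (1 - ρ) := by
  have := integral_toReal (f := fun ω => (g ω : ℝ≥0∞)) (μ := μ)
    (measurable_from_top.comp hg).aemeasurable (by simp)
  simp only [ENNReal.toReal_natCast] at this
  rw [this, lintegral_natCast_of_geometric_tail hg h0 h1 ht,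
    ENNReal.toReal_ofReal (div_nonneg h0 (sub_nonneg.2 h1.le))]

theorem integral_sum_natCast_of_geometric_tail {ι : Type*} (s : Finset ι) {Z : ι → Ω → ℕ}
    {ρ : ι → ℝ} (hZ : ∀ i ∈ s, Measurable (Z i)) (hρ : ∀ i ∈ s, 0 ≤ ρ i ∧ ρ i < 1)
    (ht : ∀ i ∈ s, ∀ m : ℕ, μ {ω | m ≤ Z i ω} = ENNReal.ofReal (ρ i ^ m)) :
    ∫ ω, ∑ i ∈ s, (Z i ω : ℝ) ∂μ = ∑ i ∈ s, ρ i / (1 - ρ i) := by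
  rw [integral_finsetSum s fun i hi =>
    integrable_natCast_of_geometric_tail (hZ i hi) (hρ i hi).1 (hρ i hi).2 (ht i hi)]
  exact sum_congr rfl fun i hi =>
    integral_natCast_of_geometric_tail (hZ i hi) (hρ i hi).1 (hρ i hi).2 (ht i hi)

end GeometricTail

theorem one_sub_pow_mul_one_add_mul_le_one {s : ℝ} (h0 : 0 ≤ s) (h1 : s ≤ 1) (m : ℕ) :
    (1 - s) ^ m * (1 + m * s) ≤ 1 :=
  calc (1 - s) ^ m * (1 + m * s) ≤ (1 - s) ^ m * (1 + s) ^ m := by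
        gcongr
        exact one_add_mul_le_pow (by linarith) m
    _ = (1 - s ^ 2) ^ m := by rw [← mul_pow]; ring
    _ ≤ 1 := pow_le_one₀ (by nlinarith) (by nlinarith)

theorem tendsto_mul_one_sub_pow {α : Type*} {l : Filter α} {s w : α → ℝ} {m : α → ℕ} {L : ℝ}
    (hs : ∀ᶠ x in l, 0 ≤ s x ∧ s x ≤ 1) (hw : ∀ᶠ x in l, 0 ≤ w x)
    (hms : Tendsto (fun x => m x * s x) l (𝓝 0))
    (hL : Tendsto (fun x => w x * (m x * s x)) l (𝓝 L)) :
    Tendsto (fun x => w x * (1 - (1 - s x) ^ m x)) l (𝓝 L) := by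
  have hlow : Tendsto (fun x => w x * (m x * s x) / (1 + m x * s x)) l (𝓝 L) := by
    have h := hL.div (tendsto_const_nhds.add hms) (by norm_num : (1 : ℝ) + 0 ≠ 0)
    rwa [add_zero, div_one] at h
  refine tendsto_of_tendsto_of_tendsto_of_le_of_le' hlow hL ?_ ?_ <;>
    filter_upwards [hs, hw] with x ⟨h0, h1⟩ hwx
  · have hpos : 0 < 1 + m x * s x := by positivity
    rw [mul_div_assoc]
    gcongr
    rw [div_le_iff₀ hpos]
    nlinarith [one_sub_pow_mul_one_add_mul_le_one h0 h1 (m x)]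
  · gcongr
    have := one_add_mul_le_pow (a := -s x) (by linarith) (m x)
    rw [← sub_eq_add_neg] at this
    linarith

theorem tendsto_one_sub_pow_nhds_one {α : Type*} {l : Filter α} {s : α → ℝ}
    {m : α → ℕ} (hs : ∀ᶠ x in l, 0 ≤ s x ∧ s x ≤ 1)
    (hms : Tendsto (fun x => m x * s x) l (𝓝 0)) :
    Tendsto (fun x => (1 - s x) ^ m x) l (𝓝 1) := by
  have := tendsto_mul_one_sub_pow hs (.of_forall fun _ => zero_le_one) hms (by simpa using hms)
  simpa using (tendsto_const_nhds (x := (1 : ℝ))).sub this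

section ThreeHalves

variable {a : ℝ}

theorem rpow_three_halves_eq_mul_sqrt {x : ℝ} (hx : 0 ≤ x) : x ^ ((3 : ℝ) / 2) = x * √x := by
  rw [Real.sqrt_eq_rpow, show (3 : ℝ) / 2 = 1 + 1 / 2 by norm_num,
    Real.rpow_add' hx (by norm_num), Real.rpow_one]

theorem tendsto_natCast_sub_add_div_self (j c : ℕ) :
    Tendsto (fun n : ℕ => ((n - j + c : ℕ) : ℝ) / n) atTop (𝓝 1) := by
  have h : Tendsto (fun n : ℕ => 1 + ((c : ℝ) - j) / n) atTop (𝓝 1) := by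
    simpa using tendsto_const_nhds.add (tendsto_const_div_atTop_nhds_zero_nat ((c : ℝ) - j))
  refine h.congr' ?_
  filter_upwards [eventually_ge_atTop (j + 1)] with n hn
  have hn0 : (n : ℝ) ≠ 0 := Nat.cast_ne_zero.2 (by omega)
  rw [Nat.cast_add, Nat.cast_sub (by omega)]
  field_simp
  ring

theorem tendsto_div_sqrt_natCast (a : ℝ) : Tendsto (fun n : ℕ => a / √(n : ℝ)) atTop (𝓝 0) :=
  tendsto_const_nhds.div_atTop (Real.tendsto_sqrt_atTop.comp tendsto_natCast_atTop_atTop)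

theorem tendsto_div_rpow_three_halves_natCast (a : ℝ) :
    Tendsto (fun n : ℕ => a / (n : ℝ) ^ ((3 : ℝ) / 2)) atTop (𝓝 0) :=
  tendsto_const_nhds.div_atTop
    ((tendsto_rpow_atTop (by norm_num)).comp tendsto_natCast_atTop_atTop)

theorem eventually_div_rpow_three_halves_mem_Icc (ha : 0 ≤ a) :
    ∀ᶠ n : ℕ in atTop, 0 ≤ a / (n : ℝ) ^ ((3 : ℝ) / 2) ∧ a / (n : ℝ) ^ ((3 : ℝ) / 2) ≤ 1 := by
  filter_upwards [(tendsto_div_rpow_three_halves_natCast a).eventually_le_const zero_lt_one]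
    with n hn
  exact ⟨by positivity, hn⟩

theorem natCast_mul_div_rpow_three_halves (m n : ℕ) :
    (m : ℝ) * (a / (n : ℝ) ^ ((3 : ℝ) / 2)) = m / n * (a / √(n : ℝ)) := by
  rw [rpow_three_halves_eq_mul_sqrt n.cast_nonneg]
  ring

variable {m : ℕ → ℕ}

theorem tendsto_one_sub_div_rpow_pow (ha : 0 ≤ a)
    (hm : Tendsto (fun n : ℕ => (m n : ℝ) / n) atTop (𝓝 1)) :
    Tendsto (fun n : ℕ => (1 - a / (n : ℝ) ^ ((3 : ℝ) / 2)) ^ m n) atTop (𝓝 1) := by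
  refine tendsto_one_sub_pow_nhds_one (eventually_div_rpow_three_halves_mem_Icc ha) ?_
  simpa [natCast_mul_div_rpow_three_halves] using hm.mul (tendsto_div_sqrt_natCast a)

theorem tendsto_sqrt_mul_one_sub_one_sub_div_rpow_pow (ha : 0 ≤ a)
    (hm : Tendsto (fun n : ℕ => (m n : ℝ) / n) atTop (𝓝 1)) :
    Tendsto (fun n : ℕ => √(n : ℝ) * (1 - (1 - a / (n : ℝ) ^ ((3 : ℝ) / 2)) ^ m n))
      atTop (𝓝 a) := by
  refine tendsto_mul_one_sub_pow (eventually_div_rpow_three_halves_mem_Icc ha)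
    (.of_forall fun n => Real.sqrt_nonneg _) ?_ ?_
  · simpa [natCast_mul_div_rpow_three_halves] using hm.mul (tendsto_div_sqrt_natCast a)
  · have hlim : Tendsto (fun n : ℕ => (m n : ℝ) / n * a) atTop (𝓝 a) := by
      simpa using hm.mul_const a
    refine hlim.congr' ?_
    filter_upwards [eventually_ge_atTop 1] with n hn
    have hsqrt : √(n : ℝ) ≠ 0 := by positivity
    rw [natCast_mul_div_rpow_three_halves]
    field_simp

end ThreeHalves

section Jackson

variable {a : ℝ}

noncomputable def jacksonGapLimit (a b : ℝ) (i : ℕ) : ℝ := if i = 1 then a - b else a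

theorem tendsto_jacksonRho (ha : 0 ≤ a) (b : ℝ) (i : ℕ) :
    Tendsto (fun n => jacksonRho a b n i) atTop (𝓝 1) := by
  by_cases hi : i = 1
  · subst hi
    have hfactor : Tendsto (fun n : ℕ => 1 - a / (n : ℝ) ^ ((3 : ℝ) / 2) + b / √(n : ℝ))
        atTop (𝓝 1) := by
      simpa using (tendsto_const_nhds.sub (tendsto_div_rpow_three_halves_natCast a)).add
        (tendsto_div_sqrt_natCast b)
    simpa [jacksonRho] using hfactor.mul
      (tendsto_one_sub_div_rpow_pow ha (by simpa using tendsto_natCast_sub_add_div_self 1 0))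
  · simpa [jacksonRho, hi] using
      tendsto_one_sub_div_rpow_pow ha (tendsto_natCast_sub_add_div_self i 1)

theorem tendsto_sqrt_mul_one_sub_jacksonRho (ha : 0 ≤ a) (b : ℝ) (i : ℕ) :
    Tendsto (fun n : ℕ => √(n : ℝ) * (1 - jacksonRho a b n i)) atTop
      (𝓝 (jacksonGapLimit a b i)) := by
  by_cases hi : i = 1
  · subst hi
    have hpow : Tendsto (fun n : ℕ => √(n : ℝ) * (1 - (1 - a / (n : ℝ) ^ ((3 : ℝ) / 2)) ^ n))
        atTop (𝓝 a) :=
      tendsto_sqrt_mul_one_sub_one_sub_div_rpow_pow ha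
        (by simpa using tendsto_natCast_sub_add_div_self 0 0)
    have hfactor : Tendsto (fun n : ℕ => b * (1 - a / (n : ℝ) ^ ((3 : ℝ) / 2)) ^ (n - 1))
        atTop (𝓝 b) := by
      simpa using (tendsto_one_sub_div_rpow_pow ha
        (by simpa using tendsto_natCast_sub_add_div_self 1 0)).const_mul b
    refine (hpow.sub hfactor).congr' ?_
    filter_upwards [eventually_ge_atTop 1] with n hn
    have hsqrt : √(n : ℝ) ≠ 0 := by positivity
    obtain ⟨j, rfl⟩ : ∃ j, n = j + 1 := ⟨n - 1, by omega⟩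
    simp only [jacksonRho, if_pos, Nat.add_sub_cancel, pow_succ]
    field_simp
    ring
  · simpa [jacksonRho, jacksonGapLimit, hi] using
      tendsto_sqrt_mul_one_sub_one_sub_div_rpow_pow ha (tendsto_natCast_sub_add_div_self i 1)

theorem sum_Icc_inv_jacksonGapLimit (a b : ℝ) {k : ℕ} (hk : 1 ≤ k) :
    ∑ i ∈ Icc 1 k, (jacksonGapLimit a b i)⁻¹ = 1 / (a - b) + ((k : ℝ) - 1) / a := by
  rw [Icc_eq_cons_Ioc hk, sum_cons, sum_congr rfl fun i hi => by
    rw [jacksonGapLimit, if_neg (mem_Ioc.1 hi).1.ne']]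
  simp [jacksonGapLimit, Nat.cast_sub hk, div_eq_mul_inv]

end Jackson

theorem tendsto_sum_div_one_sub_div {α ι : Type*} {l : Filter α} (s : Finset ι)
    {ρ : α → ι → ℝ} {r : α → ℝ} {L : ι → ℝ}
    (hρ : ∀ i ∈ s, Tendsto (fun x => ρ x i) l (𝓝 1))
    (hgap : ∀ i ∈ s, Tendsto (fun x => r x * (1 - ρ x i)) l (𝓝 (L i)))
    (hL : ∀ i ∈ s, L i ≠ 0) :
    Tendsto (fun x => (∑ i ∈ s, ρ x i / (1 - ρ x i)) / r x) l (𝓝 (∑ i ∈ s, (L i)⁻¹)) := by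
  simp_rw [sum_div, div_div, mul_comm _ (r _)]
  exact tendsto_finsetSum s fun i hi => by
    rw [← one_div]
    exact (hρ i hi).div (hgap i hi) (hL i hi)

theorem eventually_mem_Ico_of_tendsto {α : Type*} {l : Filter α} {ρ r : α → ℝ} {L : ℝ}
    (hρ : Tendsto ρ l (𝓝 1)) (hgap : Tendsto (fun x => r x * (1 - ρ x)) l (𝓝 L)) (hL : 0 < L)
    (hr : ∀ᶠ x in l, 0 ≤ r x) :
    ∀ᶠ x in l, 0 ≤ ρ x ∧ ρ x < 1 := by
  filter_upwards [hρ.eventually_const_le zero_lt_one, hgap.eventually_const_lt hL, hr]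
    with x h0 hpos hrx
  exact ⟨h0, by nlinarith⟩

theorem expected_kth_ranked_queue_asymptotics_general
    (a b : ℝ) (hb : 0 < b) (hab : b < a) (k : ℕ) (hk : 1 ≤ k)
    {Ω : Type*} [MeasurableSpace Ω] (μ : Measure Ω)
    (Z : ℕ → ℕ → Ω → ℕ)
    (hmeas : ∀ n i, Measurable (Z n i))
    (htail : ∀ n, 1 ≤ n → ∀ i ∈ Icc 1 n, ∀ m : ℕ,
      μ {ω | m ≤ Z n i ω} = ENNReal.ofReal (jacksonRho a b n i ^ m)) :
    Tendsto
      (fun n : ℕ =>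
        (∫ ω, ∑ i ∈ Icc 1 k, (Z n i ω : ℝ) ∂μ)
          / (Real.sqrt n * (1 / (a - b) + ((k : ℝ) - 1) / a)))
      atTop (nhds 1) := by
  have ha : 0 ≤ a := hb.le.trans hab.le
  have hgap_pos (i : ℕ) : 0 < jacksonGapLimit a b i := by
    unfold jacksonGapLimit; split_ifs <;> linarith
  have hC : 1 / (a - b) + ((k : ℝ) - 1) / a ≠ 0 := by
    rw [← sum_Icc_inv_jacksonGapLimit a b hk]
    exact (sum_pos (fun i _ => inv_pos.2 (hgap_pos i)) (nonempty_Icc.2 hk)).ne'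
  have hmean := tendsto_sum_div_one_sub_div (Icc 1 k) (fun i _ => tendsto_jacksonRho ha b i)
    (fun i _ => tendsto_sqrt_mul_one_sub_jacksonRho ha b i) fun i _ => (hgap_pos i).ne'
  rw [sum_Icc_inv_jacksonGapLimit a b hk] at hmean
  have hgeom : ∀ᶠ n in atTop, ∀ i ∈ Icc 1 k, 0 ≤ jacksonRho a b n i ∧ jacksonRho a b n i < 1 :=
    (eventually_all_finset _).2 fun i _ => eventually_mem_Ico_of_tendsto
      (tendsto_jacksonRho ha b i) (tendsto_sqrt_mul_one_sub_jacksonRho ha b i) (hgap_pos i)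
      (.of_forall fun n => Real.sqrt_nonneg _)
  have hlim := hmean.div_const (1 / (a - b) + ((k : ℝ) - 1) / a)
  rw [div_self hC] at hlim
  refine hlim.congr' ?_
  filter_upwards [hgeom, eventually_ge_atTop k] with n hρ hnk
  rw [integral_sum_natCast_of_geometric_tail _ (fun i _ => hmeas n i) hρ fun i hi =>
    htail n (hk.trans hnk) i (Icc_subset_Icc_right hnk hi), div_div]

/-- Asymptotics of the expected `k`-th ranked queue length in steady state:
`E[Σ_{i=1}^k Z_i^n] / (√n (1/(a−b) + (k−1)/a)) → 1`. -/
theorem expected_kth_ranked_queue_asymptotics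
    (a b : ℝ) (hb : 0 < b) (hab : b < a) (k : ℕ) (hk : 1 ≤ k)
    {Ω : Type*} [MeasurableSpace Ω] (μ : Measure Ω) [IsProbabilityMeasure μ]
    (Z : ℕ → ℕ → Ω → ℕ)
    (hmeas : ∀ n i, Measurable (Z n i))
    (htail : ∀ n, 1 ≤ n → ∀ i ∈ Icc 1 n, ∀ m : ℕ,
      μ {ω | m ≤ Z n i ω} = ENNReal.ofReal (jacksonRho a b n i ^ m)) :
    Tendsto
      (fun n : ℕ =>
        (∫ ω, ∑ i ∈ Icc 1 k, (Z n i ω : ℝ) ∂μ)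
          / (Real.sqrt n * (1 / (a - b) + ((k : ℝ) - 1) / a)))
      atTop (nhds 1) :=
  expected_kth_ranked_queue_asymptotics_general a b hb hab k hk μ Z hmeas htail
end
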